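/- arXiv:2309.05303 — 2 statements merged into one kernel-verified Lean document; each statement's English description precedes it below -/
import Mathlib

section
/- Let V be a finite-dimensional normed space, A : V × V → ℝ bilinear, B : V × V × V → ℝ trilinear with |B(x,y,z)| ≤ C_b‖x‖‖y‖‖z‖, F ∈ V*, and let ψ ∈ V solve A(ψ,φ) + B(ψ,ψ,φ) = F(φ) for all φ. Suppose for each z in a ball around ψ the bilinear form (θ,φ) ↦ A(θ,φ) + B(z,θ,φ) + B(θ,z,φ) satisfies an inf-sup condition with constant β' > 0. If the Newton iterates ψ^j solve A(ψ^j,φ) + B(ψ^{j−1},ψ^j,φ) + B(ψ^j,ψ^{j−1},φ) = B(ψ^{j−1},ψ^{j−1},φ) + F(φ), then ‖ψ − ψ^j‖ ≤ (C_b/β')‖ψ − ψ^{j−1}‖². -/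
theorem newton_quadratic_convergence_step
    {V : Type*} [NormedAddCommGroup V] [NormedSpace ℝ V] [FiniteDimensional ℝ V]
    (A : V →ₗ[ℝ] V →ₗ[ℝ] ℝ) (B : V →ₗ[ℝ] V →ₗ[ℝ] V →ₗ[ℝ] ℝ) (F : V →ₗ[ℝ] ℝ)
    (C_b β' δ : ℝ) (hCb : 0 ≤ C_b) (hβ' : 0 < β') (hδ : 0 < δ)
    (hboundB : ∀ x y z : V, |B x y z| ≤ C_b * ‖x‖ * ‖y‖ * ‖z‖)
    (ψ : V) (hψ : ∀ φ : V, A ψ φ + B ψ ψ φ = F φ)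
    (hinfsup : ∀ z : V, ‖z - ψ‖ ≤ δ → ∀ θ : V,
      β' * ‖θ‖ ≤ sSup ((fun φ => A θ φ + B z θ φ + B θ z φ) '' {φ : V | ‖φ‖ = 1}))
    (θprev θnext : V) (hprev : ‖ψ - θprev‖ ≤ δ)
    (hnewton : ∀ φ : V,
      A θnext φ + B θprev θnext φ + B θnext θprev φ = B θprev θprev φ + F φ) :
    ‖ψ - θnext‖ ≤ (C_b / β') * ‖ψ - θprev‖ ^ 2 := by
  have key : ∀ φ : V, A (ψ - θnext) φ + B θprev (ψ - θnext) φ + B (ψ - θnext) θprev φ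
      = - B (ψ - θprev) (ψ - θprev) φ := by
    intro φ
    have h1 := hψ φ
    have h2 := hnewton φ
    simp only [map_sub, LinearMap.sub_apply] at *
    linarith
  have hmain := hinfsup θprev (by rwa [norm_sub_rev]) (ψ - θnext)
  have hsup : sSup ((fun φ => A (ψ - θnext) φ + B θprev (ψ - θnext) φ
      + B (ψ - θnext) θprev φ) '' {φ : V | ‖φ‖ = 1}) ≤ C_b * ‖ψ - θprev‖ ^ 2 := by
    apply Real.sSup_le
    · rintro x ⟨φ, hφ, rfl⟩
      simp only [Set.mem_setOf_eq] at hφ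
      dsimp only
      rw [key φ]
      calc -B (ψ - θprev) (ψ - θprev) φ ≤ |B (ψ - θprev) (ψ - θprev) φ| := neg_le_abs _
        _ ≤ C_b * ‖ψ - θprev‖ * ‖ψ - θprev‖ * ‖φ‖ := hboundB _ _ _
        _ = C_b * ‖ψ - θprev‖ ^ 2 := by rw [hφ]; ring
    · positivity
  have h3 : β' * ‖ψ - θnext‖ ≤ C_b * ‖ψ - θprev‖ ^ 2 := le_trans hmain hsup
  rw [div_mul_eq_mul_div, le_div_iff₀ hβ']
  nlinarith
end

section
/- Let H be a real inner product space, a(·,·) its inner product, and let a_h(u,v) := a(Πu,Πv) + S(u−Πu, v−Πu') with Π a linear idempotent map satisfying a(Πu,q)=a(u,q) for q in the range of Π, and S a symmetric bilinear form with c₀ a(w,w) ≤ S(w,w) ≤ c₁ a(w,w) for all w ∈ ker Π. Then α_* a(u,u) ≤ a_h(u,u) ≤ α^* a(u,u) for all u, with α_* = min(1,c₀) and α^* = max(1,c₁). -/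
open scoped RealInnerProductSpace

theorem vem_stability
    {H : Type*} [NormedAddCommGroup H] [InnerProductSpace ℝ H]
    (P : H →ₗ[ℝ] H) (hidem : ∀ u, P (P u) = P u)
    (hortho : ∀ u : H, ∀ q ∈ LinearMap.range P, ⟪P u, q⟫ = ⟪u, q⟫)
    (S : H →ₗ[ℝ] H →ₗ[ℝ] ℝ) (hSsymm : ∀ w w' : H, S w w' = S w' w)
    (c₀ c₁ : ℝ)
    (hS : ∀ w ∈ LinearMap.ker P, c₀ * ⟪w, w⟫ ≤ S w w ∧ S w w ≤ c₁ * ⟪w, w⟫) :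
    ∀ u : H,
      min 1 c₀ * ⟪u, u⟫ ≤ ⟪P u, P u⟫ + S (u - P u) (u - P u) ∧
      ⟪P u, P u⟫ + S (u - P u) (u - P u) ≤ max 1 c₁ * ⟪u, u⟫ := by
  intro u
  have hker : u - P u ∈ LinearMap.ker P := by
    simp [LinearMap.mem_ker, map_sub, hidem u]
  have hS' := hS (u - P u) hker
  have horth : ⟪P u, P u⟫ = ⟪u, P u⟫ :=
    hortho u (P u) ⟨u, rfl⟩
  have hpyth : ⟪u, u⟫ = ⟪P u, P u⟫ + ⟪u - P u, u - P u⟫ := by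
    have h1 : ⟪u - P u, u - P u⟫ = ⟪u, u⟫ - 2 * ⟪u, P u⟫ + ⟪P u, P u⟫ := by
      rw [inner_sub_sub_self]; rw [real_inner_comm (P u) u]; ring
    rw [h1, horth]; ring
  have hA : (0:ℝ) ≤ ⟪P u, P u⟫ := real_inner_self_nonneg
  have hB : (0:ℝ) ≤ ⟪u - P u, u - P u⟫ := real_inner_self_nonneg
  constructor
  · have h1 : min 1 c₀ ≤ 1 := min_le_left _ _
    have h2 : min 1 c₀ ≤ c₀ := min_le_right _ _
    nlinarith [hS'.1]
  · have h1 : (1:ℝ) ≤ max 1 c₁ := le_max_left _ _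
    have h2 : c₁ ≤ max 1 c₁ := le_max_right _ _
    nlinarith [hS'.2]
end
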